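/- arXiv:1701.03151 — 4 statements merged into one kernel-verified Lean document; each statement's English description precedes it below -/
import Mathlib

section
/- For all x, y, z ∈ {0,1} (viewed as integers), x·y·z = max_{w ∈ {0,1}} w·(x + y + z − 2); equivalently, −x·y·z = min_{w ∈ {0,1}} −w·(x + y + z − 2). -/
/-- Ishikawa's third-order identity: for Boolean `x, y, z` (as integers),
`x·y·z = max_{w ∈ {0,1}} w·(x + y + z − 2)`, equivalently
`−x·y·z = min_{w ∈ {0,1}} −w·(x + y + z − 2)`. -/
theorem ishikawa_third_order (x y z : ℤ)
    (hx : x = 0 ∨ x = 1) (hy : y = 0 ∨ y = 1) (hz : z = 0 ∨ z = 1) :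
    x * y * z =
      ({0, 1} : Finset ℤ).sup' (Finset.insert_nonempty 0 {1})
        (fun w => w * (x + y + z - 2)) ∧
    -(x * y * z) =
      ({0, 1} : Finset ℤ).inf' (Finset.insert_nonempty 0 {1})
        (fun w => -(w * (x + y + z - 2))) := by
  rcases hx with rfl|rfl <;> rcases hy with rfl|rfl <;> rcases hz with rfl|rfl <;>
    simp [Finset.sup'_insert, Finset.inf'_insert]
end

section
/- For every n ≥ 1 and all x_1, …, x_n ∈ {0,1} (viewed as integers), ∏_{i=1}^n x_i = max_{w ∈ {0,1}} w·( (∑_{i=1}^n x_i) − (n − 1) ). -/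
/-! Maximizing `w * a` over `w ∈ {0, 1}` takes the positive part of `a`. For Boolean `xᵢ` the
positive part of `∑ xᵢ - (n - 1)` is `1` when all `xᵢ = 1`, and `0` as soon as one `xᵢ = 0`,
because the remaining `n - 1` terms sum to at most `n - 1`. -/

open Finset

section Boolean

variable {ι R : Type*} [CommRing R] [LinearOrder R] [IsStrictOrderedRing R]

theorem Finset.sum_le_card_of_boolean {s : Finset ι} {x : ι → R}
    (hx : ∀ i ∈ s, x i = 0 ∨ x i = 1) : ∑ i ∈ s, x i ≤ #s := by
  simpa using Finset.sum_le_card_nsmul s x 1 fun i hi => by rcases hx i hi with h | h <;> simp [h]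

theorem Finset.prod_eq_max_zero_sum_sub_of_boolean [DecidableEq ι] (s : Finset ι) {x : ι → R}
    (hx : ∀ i ∈ s, x i = 0 ∨ x i = 1) :
    ∏ i ∈ s, x i = max 0 (∑ i ∈ s, x i - (#s - 1)) := by
  induction s using Finset.induction_on with
  | empty => simp
  | insert a s ha ih =>
    rw [prod_insert ha, sum_insert ha, card_insert_of_notMem ha,
      ih fun i hi => hx i (mem_insert_of_mem hi)]
    push_cast
    rcases hx a (mem_insert_self a s) with h | h
    · have hs := sum_le_card_of_boolean fun i hi => hx i (mem_insert_of_mem hi)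
      rw [h, zero_mul, max_eq_left (by linarith)]
    · rw [h, one_mul]
      ring_nf

end Boolean

theorem Int.sup'_zero_one_mul (a : ℤ) :
    ({0, 1} : Finset ℤ).sup' (insert_nonempty 0 {1}) (fun w => w * a) = max 0 a := by
  simp [sup'_insert]

theorem ishikawa_general_order_general (n : ℕ) (x : Fin n → ℤ)
    (hx : ∀ i, x i = 0 ∨ x i = 1) :
    ∏ i, x i =
      ({0, 1} : Finset ℤ).sup' (Finset.insert_nonempty 0 {1})
        (fun w => w * ((∑ i, x i) - ((n : ℤ) - 1))) := by
  rw [Int.sup'_zero_one_mul, prod_eq_max_zero_sum_sub_of_boolean univ fun i _ => hx i,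
    card_univ, Fintype.card_fin]

/-- General-order Ishikawa identity: for `n ≥ 1` and Boolean `x₁, …, xₙ` (as integers),
`∏ᵢ xᵢ = max_{w ∈ {0,1}} w·((∑ᵢ xᵢ) − (n − 1))`. -/
theorem ishikawa_general_order (n : ℕ) (hn : 1 ≤ n) (x : Fin n → ℤ)
    (hx : ∀ i, x i = 0 ∨ x i = 1) :
    ∏ i, x i =
      ({0, 1} : Finset ℤ).sup' (Finset.insert_nonempty 0 {1})
        (fun w => w * ((∑ i, x i) - ((n : ℤ) - 1))) :=
  ishikawa_general_order_general n x hx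
end

section
/- Let n ≥ 1, let c be a real number with c ≤ 0, and let x_1, …, x_n ∈ {0,1} (viewed as reals). Then c·∏_{i=1}^n x_i = min_{w ∈ {0,1}} ( ∑_{i=1}^n c·w·x_i − (n−1)·c·w ). In particular, in the resulting pairwise form every product term w·x_i carries the coefficient c ≤ 0, i.e., all constructed pairwise coefficients are non-positive. -/
/-!
On `{0,1}`-valued variables the product is the clipped linear form `∏ xᵢ = max 0 (∑ xᵢ - (n - 1))`:
it is `1` when every `xᵢ = 1`, and otherwise `∑ xᵢ ≤ n - 1`. Multiplying by `c ≤ 0` turns the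
`max` into a `min`, and `min 0 (c (∑ xᵢ - (n - 1)))` is the minimum over `w ∈ {0,1}` of
`c w (∑ xᵢ - (n - 1))`.
-/

open Finset

section BooleanProduct

variable {ι : Type*} [Fintype ι] {x : ι → ℝ}

theorem sum_le_add_card_sub_one (hx : ∀ i, x i ≤ 1) (j : ι) :
    ∑ i, x i ≤ x j + (Fintype.card ι - 1) := by
  have hdeficit : 1 - x j ≤ ∑ i, (1 - x i) :=
    single_le_sum (fun i _ => sub_nonneg.mpr (hx i)) (mem_univ j)
  simp only [sum_sub_distrib, sum_const, card_univ, nsmul_eq_mul, mul_one] at hdeficit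
  linarith

theorem prod_eq_max_zero_sum_sub_card_sub_one (hx : ∀ i, x i = 0 ∨ x i = 1) :
    ∏ i, x i = max 0 (∑ i, x i - (Fintype.card ι - 1)) := by
  by_cases hall : ∀ i, x i = 1
  · simp [hall]
  · obtain ⟨j, hj⟩ := not_forall.mp hall
    have hj0 : x j = 0 := (hx j).resolve_right hj
    have hsum := sum_le_add_card_sub_one (fun i => (hx i).elim (·.le.trans zero_le_one) (·.le)) j
    rw [prod_eq_zero (mem_univ j) hj0, max_eq_left (by linarith)]

end BooleanProduct

theorem ishikawa_nonpositive_coefficient_general (n : ℕ) (c : ℝ) (hc : c ≤ 0)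
    (x : Fin n → ℝ) (hx : ∀ i, x i = 0 ∨ x i = 1) :
    c * ∏ i, x i =
      ({0, 1} : Finset ℝ).inf' (Finset.insert_nonempty 0 {1})
        (fun w => (∑ i, c * w * x i) - ((n : ℝ) - 1) * c * w) ∧
    c ≤ 0 := by
  refine ⟨?_, hc⟩
  have hmin : c * max 0 (∑ i, x i - ((n : ℝ) - 1)) = min 0 (c * (∑ i, x i - ((n : ℝ) - 1))) := by
    simpa using smul_max_of_nonpos hc 0 (∑ i, x i - ((n : ℝ) - 1))
  rw [prod_eq_max_zero_sum_sub_card_sub_one hx, Fintype.card_fin, hmin]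
  simp only [inf'_insert, inf'_singleton, singleton_nonempty, zero_mul, mul_zero, sum_const_zero,
    sub_self, mul_one]
  congr 1
  rw [mul_sub, mul_sum]
  ring

/-- Ishikawa reduction for an order-`n` potential with non-positive coefficient `c`:
`c·∏ᵢ xᵢ = min_{w ∈ {0,1}} (∑ᵢ c·w·xᵢ − (n−1)·c·w)`, and in the resulting pairwise
form every product term `w·xᵢ` carries the non-positive coefficient `c`. -/
theorem ishikawa_nonpositive_coefficient (n : ℕ) (hn : 1 ≤ n) (c : ℝ) (hc : c ≤ 0)
    (x : Fin n → ℝ) (hx : ∀ i, x i = 0 ∨ x i = 1) :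
    c * ∏ i, x i =
      ({0, 1} : Finset ℝ).inf' (Finset.insert_nonempty 0 {1})
        (fun w => (∑ i, c * w * x i) - ((n : ℝ) - 1) * c * w) ∧
    c ≤ 0 :=
  ishikawa_nonpositive_coefficient_general n c hc x hx
end

section
/- Let Y be a finite nonempty set, n ≥ 1, d ∈ ℕ, and let w ∈ ℝ^d, ξ ∈ ℝ, ε ≥ 0. For each i = 1, …, n, let Ψ_i : Y → ℝ^d be a joint feature map, y_i ∈ Y a ground-truth label, and Δ_i : Y → ℝ a loss function. Suppose each ȳ_i ∈ Y maximizes the function ŷ ↦ Δ_i(ŷ) + ⟨w, Ψ_i(ŷ)⟩ over Y, and suppose (1/n)·∑_{i=1}^n Δ_i(ȳ_i) − (1/n)·⟨w, ∑_{i=1}^n (Ψ_i(y_i) − Ψ_i(ȳ_i))⟩ ≤ ξ + ε. Then for every tuple (ŷ_1, …, ŷ_n) ∈ Y^n it holds that (1/n)·∑_{i=1}^n Δ_i(ŷ_i) − (1/n)·⟨w, ∑_{i=1}^n (Ψ_i(y_i) − Ψ_i(ŷ_i))⟩ ≤ ξ + ε; that is, (w, ξ + ε) satisfies every margin constraint of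 the structural SVM. -/
/-- Feasibility at termination of the cutting-plane algorithm: if each `ȳᵢ` is an exact
worst violator (maximizer of `ŷ ↦ Δᵢ(ŷ) + ⟨w, Ψᵢ(ŷ)⟩`) and the violation of the tuple
`(ȳ₁, …, ȳₙ)` is at most `ξ + ε`, then `(w, ξ + ε)` satisfies every margin constraint
of the structural SVM. -/
theorem cutting_plane_feasibility
    {Y : Type*} [Fintype Y] [Nonempty Y] (n d : ℕ) (hn : 1 ≤ n)
    (w : Fin d → ℝ) (ξ ε : ℝ) (hε : 0 ≤ ε)
    (Ψ : Fin n → Y → Fin d → ℝ) (ytrue : Fin n → Y) (Δ : Fin n → Y → ℝ)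
    (ybar : Fin n → Y)
    (hmax : ∀ i, ∀ yhat : Y,
      Δ i yhat + ∑ j, w j * Ψ i yhat j ≤ Δ i (ybar i) + ∑ j, w j * Ψ i (ybar i) j)
    (hterm : (1 / (n : ℝ)) * ∑ i, Δ i (ybar i)
        - (1 / (n : ℝ)) * ∑ j, w j * (∑ i, (Ψ i (ytrue i) j - Ψ i (ybar i) j))
        ≤ ξ + ε) :
    ∀ yhat : Fin n → Y,
      (1 / (n : ℝ)) * ∑ i, Δ i (yhat i)
        - (1 / (n : ℝ)) * ∑ j, w j * (∑ i, (Ψ i (ytrue i) j - Ψ i (yhat i) j))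
        ≤ ξ + ε := by
  intro yhat
  have key : ∀ z : Fin n → Y,
      (1 / (n : ℝ)) * ∑ i, Δ i (z i)
        - (1 / (n : ℝ)) * ∑ j, w j * (∑ i, (Ψ i (ytrue i) j - Ψ i (z i) j))
      = (1 / (n : ℝ)) * ∑ i, (Δ i (z i) + ∑ j, w j * Ψ i (z i) j
          - ∑ j, w j * Ψ i (ytrue i) j) := by
    intro z
    rw [← mul_sub]
    congr 1
    simp only [Finset.mul_sum, mul_sub]
    rw [Finset.sum_comm, ← Finset.sum_sub_distrib]
    exact Finset.sum_congr rfl fun i _ => by rw [Finset.sum_sub_distrib]; ring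
  rw [key yhat]
  rw [key ybar] at hterm
  refine le_trans ?_ hterm
  apply mul_le_mul_of_nonneg_left _ (by positivity)
  apply Finset.sum_le_sum
  intro i _
  have := hmax i (yhat i)
  linarith
end
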